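/- DPO aligns policy log-odds with utilities: let Y be a finite type with at least two elements, U : Y → ℝ a utility, λ > 0, β > 0, π_ref : Y → ℝ a strictly positive reference policy, and w(y, y') > 0 weights for all ordered pairs y ≠ y'. Define preference probabilities p(y, y') = σ(λ(U(y) − U(y'))) with σ(t) = 1/(1+e^{−t}), and for strictly positive π : Y → ℝ define the DPO objective L(π) = ∑_{y ≠ y'} w(y, y') · [ −p(y, y')·log σ(β(h(y) − h(y'))) − (1 − p(y, y'))·log σ(−β(h(y) − h(y'))) ], where h(y) = log π(y) − log π_ref(y). Then π*(y) = π_ref(y)·exp((λ/β)·U(y)) minimizes L, and every minimizer π of L satisfies, for all y, y': log π(y) − log π(y') = (λ/β)·(U(y) − U(y')) + (log π_ref(y) − log π_ref(y')). -/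

import Mathlib

/-!
The summand of the DPO objective for a pair `y ≠ y'` is a binary cross-entropy between the
target probability `p y y'` and `σ(m)`, where `m = β (h y − h y')` is the pair's margin. By
Gibbs' inequality (from `log x < x - 1`) and injectivity of `σ`, it is minimized exactly when
`σ(m) = p y y'`. For `π*` every margin is `λ (U y − U y')`, so all summands are minimal at
once; a minimizer must then have the same margins on every pair of positive weight.
-/

/-- The standard logistic sigmoid `σ(t) = 1/(1 + e^{−t})`. -/
noncomputable def logistic (t : ℝ) : ℝ := 1 / (1 + Real.exp (-t))

/-- The DPO objective: the weighted sum, over ordered pairs `y ≠ y'`, of the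
Bradley–Terry cross-entropy between target preference probabilities `p y y'` and
the model's implied preference probabilities `σ(β(h y − h y'))`, where
`h y = log π y − log π_ref y` is the log-ratio of the learned policy to the fixed
reference policy. -/
noncomputable def dpoLoss {Y : Type*} [Fintype Y] [DecidableEq Y]
    (w p : Y → Y → ℝ) (β : ℝ) (πref π : Y → ℝ) : ℝ :=
  ∑ y : Y, ∑ y' : Y,
    if y = y' then 0 else
      w y y' *
        (-(p y y') *
            Real.log (logistic (β * ((Real.log (π y) - Real.log (πref y)) -
              (Real.log (π y') - Real.log (πref y'))))) -
          (1 - p y y') *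
            Real.log (logistic (-(β * ((Real.log (π y) - Real.log (πref y)) -
              (Real.log (π y') - Real.log (πref y')))))))

section CrossEntropy

open Real

lemma logistic_eq_sigmoid : logistic = sigmoid :=
  funext fun _ => one_div _

lemma mul_log_sub_mul_log_le_sub {a b : ℝ} (ha : 0 < a) (hb : 0 < b) :
    a * log b - a * log a ≤ b - a := by
  have h := mul_le_mul_of_nonneg_left (log_le_sub_one_of_pos (div_pos hb ha)) ha.le
  rw [log_div hb.ne' ha.ne', mul_sub_one, mul_div_cancel₀ _ ha.ne'] at h
  linarith

lemma mul_log_sub_mul_log_lt_sub {a b : ℝ} (ha : 0 < a) (hb : 0 < b) (hab : b ≠ a) :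
    a * log b - a * log a < b - a := by
  have hba : b / a ≠ 1 := fun h => hab ((div_eq_one_iff_eq ha.ne').mp h)
  have h := mul_lt_mul_of_pos_left (log_lt_sub_one_of_pos (div_pos hb ha) hba) ha
  rw [log_div hb.ne' ha.ne', mul_sub_one, mul_div_cancel₀ _ ha.ne'] at h
  linarith

lemma binary_crossEntropy_lt {q t : ℝ} (hq₀ : 0 < q) (hq₁ : q < 1) (ht₀ : 0 < t)
    (ht₁ : t < 1) (htq : t ≠ q) :
    -q * log q - (1 - q) * log (1 - q) < -q * log t - (1 - q) * log (1 - t) := by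
  have h₁ := mul_log_sub_mul_log_lt_sub hq₀ ht₀ htq
  have h₂ := mul_log_sub_mul_log_le_sub (sub_pos.mpr hq₁) (sub_pos.mpr ht₁)
  linarith

noncomputable def btCrossEntropy (q x : ℝ) : ℝ :=
  -q * log (logistic x) - (1 - q) * log (logistic (-x))

lemma btCrossEntropy_lt {x₀ x : ℝ} (hx : x ≠ x₀) :
    btCrossEntropy (logistic x₀) x₀ < btCrossEntropy (logistic x₀) x := by
  simp only [btCrossEntropy, logistic_eq_sigmoid, sigmoid_neg]
  exact binary_crossEntropy_lt (sigmoid_pos x₀) (sigmoid_lt_one x₀) (sigmoid_pos x)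
    (sigmoid_lt_one x) (sigmoid_injective.ne hx)

lemma btCrossEntropy_le (x₀ x : ℝ) :
    btCrossEntropy (logistic x₀) x₀ ≤ btCrossEntropy (logistic x₀) x := by
  rcases eq_or_ne x x₀ with rfl | hx
  · exact le_rfl
  · exact (btCrossEntropy_lt hx).le

end CrossEntropy

section DPO

variable {Y : Type*} {w p : Y → Y → ℝ} {β : ℝ} {πref πs π : Y → ℝ}

noncomputable def dpoMargin (β : ℝ) (πref π : Y → ℝ) (y y' : Y) : ℝ :=
  β * ((Real.log (π y) - Real.log (πref y)) - (Real.log (π y') - Real.log (πref y')))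

variable [DecidableEq Y]

lemma dpoLoss_summand_le (hw : ∀ y y', y ≠ y' → 0 ≤ w y y')
    (hπs : ∀ y y', y ≠ y' → logistic (dpoMargin β πref πs y y') = p y y') (y y' : Y) :
    (if y = y' then 0 else w y y' * btCrossEntropy (p y y') (dpoMargin β πref πs y y')) ≤
      if y = y' then 0 else w y y' * btCrossEntropy (p y y') (dpoMargin β πref π y y') := by
  split_ifs with hyy
  · exact le_rfl
  · rw [← hπs y y' hyy]
    exact mul_le_mul_of_nonneg_left (btCrossEntropy_le _ _) (hw y y' hyy)

variable [Fintype Y]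

lemma dpoLoss_eq_sum_btCrossEntropy :
    dpoLoss w p β πref π = ∑ y, ∑ y',
      if y = y' then 0 else w y y' * btCrossEntropy (p y y') (dpoMargin β πref π y y') :=
  rfl

lemma dpoLoss_le_of_logistic_dpoMargin_eq (hw : ∀ y y', y ≠ y' → 0 ≤ w y y')
    (hπs : ∀ y y', y ≠ y' → logistic (dpoMargin β πref πs y y') = p y y') (π : Y → ℝ) :
    dpoLoss w p β πref πs ≤ dpoLoss w p β πref π := by
  simp only [dpoLoss_eq_sum_btCrossEntropy]
  exact Finset.sum_le_sum fun y _ =>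
    Finset.sum_le_sum fun y' _ => dpoLoss_summand_le hw hπs y y'

lemma dpoLoss_lt_of_dpoMargin_ne (hw : ∀ y y', y ≠ y' → 0 < w y y')
    (hπs : ∀ y y', y ≠ y' → logistic (dpoMargin β πref πs y y') = p y y') {y y' : Y}
    (hyy : y ≠ y') (hne : dpoMargin β πref π y y' ≠ dpoMargin β πref πs y y') :
    dpoLoss w p β πref πs < dpoLoss w p β πref π := by
  have hw' : ∀ y y', y ≠ y' → 0 ≤ w y y' := fun y y' h => (hw y y' h).le
  have hstrict : btCrossEntropy (p y y') (dpoMargin β πref πs y y') <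
      btCrossEntropy (p y y') (dpoMargin β πref π y y') := by
    rw [← hπs y y' hyy]
    exact btCrossEntropy_lt hne
  simp only [dpoLoss_eq_sum_btCrossEntropy]
  refine Finset.sum_lt_sum (fun a _ => Finset.sum_le_sum fun b _ => dpoLoss_summand_le hw' hπs a b)
    ⟨y, Finset.mem_univ y, ?_⟩
  refine Finset.sum_lt_sum (fun b _ => dpoLoss_summand_le hw' hπs y b)
    ⟨y', Finset.mem_univ y', ?_⟩
  simp only [if_neg hyy]
  exact mul_lt_mul_of_pos_left hstrict (hw y y' hyy)

lemma dpoMargin_eq_of_dpoLoss_le (hw : ∀ y y', y ≠ y' → 0 < w y y')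
    (hπs : ∀ y y', y ≠ y' → logistic (dpoMargin β πref πs y y') = p y y')
    (hmin : dpoLoss w p β πref π ≤ dpoLoss w p β πref πs) (y y' : Y) :
    dpoMargin β πref π y y' = dpoMargin β πref πs y y' := by
  by_cases hyy : y = y'
  · simp [dpoMargin, hyy]
  · by_contra hne
    exact (dpoLoss_lt_of_dpoMargin_ne hw hπs hyy hne).not_ge hmin

end DPO

theorem dpo_aligns_log_odds_with_utilities_general
    {Y : Type*} [Fintype Y] [DecidableEq Y]
    (U : Y → ℝ) (lam β : ℝ) (hβ : 0 < β)
    (πref : Y → ℝ) (hπref : ∀ y, 0 < πref y)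
    (w : Y → Y → ℝ) (hw : ∀ y y', y ≠ y' → 0 < w y y')
    (p : Y → Y → ℝ) (hp : ∀ y y', p y y' = logistic (lam * (U y - U y'))) :
    (∀ π : Y → ℝ, (∀ y, 0 < π y) →
      dpoLoss w p β πref (fun y => πref y * Real.exp ((lam / β) * U y)) ≤
        dpoLoss w p β πref π) ∧
    (∀ π : Y → ℝ, (∀ y, 0 < π y) →
      (∀ π' : Y → ℝ, (∀ y, 0 < π' y) → dpoLoss w p β πref π ≤ dpoLoss w p β πref π') →
      ∀ y y' : Y, Real.log (π y) - Real.log (π y') =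
        (lam / β) * (U y - U y') + (Real.log (πref y) - Real.log (πref y'))) := by
  set πs : Y → ℝ := fun y => πref y * Real.exp (lam / β * U y)
  have hlog : ∀ y, Real.log (πs y) = Real.log (πref y) + lam / β * U y := fun y => by
    rw [Real.log_mul (hπref y).ne' (Real.exp_pos _).ne', Real.log_exp]
  have hmargin : ∀ y y', dpoMargin β πref πs y y' = lam * (U y - U y') := fun y y' => by
    simp only [dpoMargin, hlog]
    field_simp
    ring
  have hπs : ∀ y y', y ≠ y' → logistic (dpoMargin β πref πs y y') = p y y' :=
    fun y y' _ => by rw [hmargin, hp]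
  refine ⟨fun π _ => dpoLoss_le_of_logistic_dpoMargin_eq (fun y y' h => (hw y y' h).le) hπs π,
    fun π _ hmin y y' => ?_⟩
  have hπs_pos : ∀ y, 0 < πs y := fun y => mul_pos (hπref y) (Real.exp_pos _)
  have h := dpoMargin_eq_of_dpoLoss_le hw hπs (hmin πs hπs_pos) y y'
  rw [hmargin, dpoMargin] at h
  field_simp
  linarith

/-- **DPO aligns policy log-odds with utilities.** Let `Y` be a finite type with at
least two elements, `U : Y → ℝ` a utility, `λ, β > 0`, `π_ref` a strictly positive
reference policy, and `w y y' > 0` weights for ordered pairs `y ≠ y'`.  With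
Bradley–Terry preference probabilities `p y y' = σ(λ(U y − U y'))`, the policy
`π* y = π_ref y · exp((λ/β)·U y)` minimizes the DPO objective over strictly
positive policies, and every minimizer `π` satisfies, for all `y, y'`:
`log π y − log π y' = (λ/β)(U y − U y') + (log π_ref y − log π_ref y')`. -/
theorem dpo_aligns_log_odds_with_utilities
    {Y : Type*} [Fintype Y] [DecidableEq Y] (hY : 2 ≤ Fintype.card Y)
    (U : Y → ℝ) (lam β : ℝ) (hlam : 0 < lam) (hβ : 0 < β)
    (πref : Y → ℝ) (hπref : ∀ y, 0 < πref y)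
    (w : Y → Y → ℝ) (hw : ∀ y y', y ≠ y' → 0 < w y y')
    (p : Y → Y → ℝ) (hp : ∀ y y', p y y' = logistic (lam * (U y - U y'))) :
    (∀ π : Y → ℝ, (∀ y, 0 < π y) →
      dpoLoss w p β πref (fun y => πref y * Real.exp ((lam / β) * U y)) ≤
        dpoLoss w p β πref π) ∧
    (∀ π : Y → ℝ, (∀ y, 0 < π y) →
      (∀ π' : Y → ℝ, (∀ y, 0 < π' y) → dpoLoss w p β πref π ≤ dpoLoss w p β πref π') →
      ∀ y y' : Y, Real.log (π y) - Real.log (π y') =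
        (lam / β) * (U y - U y') + (Real.log (πref y) - Real.log (πref y'))) :=
  dpo_aligns_log_odds_with_utilities_general U lam β hβ πref hπref w hw p hp
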